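/- Let R = ℂ[E₁,E₂] with the derivation f determined by f(E₁) = E₁² − 2E₂, f(E₂) = E₁E₂, and δ = 4E₂ − E₁². Then for every integer j ≥ 1 and every natural number r ≥ 0, f^r(δʲ) ≠ 0. -/

import Mathlib

/-!
The specialisation `E₁ ↦ X`, `E₂ ↦ 0` intertwines `f` with the derivation `X² d/dX` of `ℂ[X]`
(both sides agree on `E₁` and `E₂`). It sends `δʲ` to `(-1)ʲ X^{2j}`, and `X² d/dX` maps `Xⁿ` to
`n X^{n+1}`, so `f^r(δʲ)` specialises to `(-1)ʲ · 2j(2j+1)⋯(2j+r-1) · X^{2j+r} ≠ 0`.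
-/

open MvPolynomial

section

variable {σ R A : Type*} [CommSemiring R] [CommSemiring A] [Algebra R A]

theorem MvPolynomial.algHom_map_derivation
    (f : Derivation R (MvPolynomial σ R) (MvPolynomial σ R)) (D : Derivation R A A)
    (φ : MvPolynomial σ R →ₐ[R] A) (hX : ∀ i, φ (f (X i)) = D (φ (X i)))
    (p : MvPolynomial σ R) : φ (f p) = D (φ p) := by
  induction p using MvPolynomial.induction_on with
  | C a => simp
  | add p q hp hq => simp only [map_add, hp, hq]
  | mul_X p i hp => simp only [Derivation.leibniz, smul_eq_mul, map_add, map_mul, hp, hX]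

theorem MvPolynomial.algHom_map_derivation_pow
    (f : Derivation R (MvPolynomial σ R) (MvPolynomial σ R)) (D : Derivation R A A)
    (φ : MvPolynomial σ R →ₐ[R] A) (hX : ∀ i, φ (f (X i)) = D (φ (X i)))
    (r : ℕ) (p : MvPolynomial σ R) :
    φ ((f.toLinearMap ^ r) p) = (D.toLinearMap ^ r) (φ p) := by
  induction r generalizing p with
  | zero => simp
  | succ r ih =>
    rw [pow_succ, pow_succ, Module.End.mul_apply, Module.End.mul_apply, ih, Derivation.coeFn_coe,
      Derivation.coeFn_coe, algHom_map_derivation f D φ hX]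

end

namespace Polynomial

variable {R : Type*} [CommSemiring R]

theorem mkDerivation_X_sq_X_pow (n : ℕ) :
    mkDerivation R (X ^ 2 : R[X]) (X ^ n) = n • X ^ (n + 1) := by
  rcases n with _ | n
  · simp
  · rw [Derivation.leibniz_pow, mkDerivation_X, smul_eq_mul, add_tsub_cancel_right, ← pow_add]

theorem mkDerivation_X_sq_pow_X_pow (n r : ℕ) :
    ((mkDerivation R (X ^ 2 : R[X])).toLinearMap ^ r) (X ^ n) =
      n.ascFactorial r • X ^ (n + r) := by
  induction r with
  | zero => simp
  | succ r ih =>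
    rw [pow_succ', Module.End.mul_apply, ih, map_nsmul, Derivation.coeFn_coe,
      mkDerivation_X_sq_X_pow, smul_smul, Nat.ascFactorial_succ, ← add_assoc, mul_comm]

end Polynomial

theorem f_iterate_on_delta_powers_ne_zero
    (f : Derivation ℂ (MvPolynomial (Fin 2) ℂ) (MvPolynomial (Fin 2) ℂ))
    (hf1 : f (X 0) = X 0 ^ 2 - 2 * X 1) (hf2 : f (X 1) = X 0 * X 1)
    (δ : MvPolynomial (Fin 2) ℂ) (hδ : δ = 4 * X 1 - X 0 ^ 2)
    (j r : ℕ) (hj : 1 ≤ j) :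
    (f.toLinearMap ^ r) (δ ^ j) ≠ 0 := by
  let φ : MvPolynomial (Fin 2) ℂ →ₐ[ℂ] Polynomial ℂ := aeval ![Polynomial.X, 0]
  let D := Polynomial.mkDerivation ℂ (Polynomial.X ^ 2 : Polynomial ℂ)
  have hφX : ∀ i, φ (f (X i)) = D (φ (X i)) := by
    intro i
    fin_cases i <;> simp [φ, D, hf1, hf2]
  have hφδ : φ (δ ^ j) = (-1 : ℂ) ^ j • Polynomial.X ^ (2 * j) := by
    rw [hδ, map_pow, Polynomial.smul_eq_C_mul, pow_mul, map_pow, map_neg, map_one, ← mul_pow]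
    simp [φ]
  have hasc : (2 * j).ascFactorial r ≠ 0 := by
    obtain ⟨k, hk⟩ : ∃ k, 2 * j = k + 1 := ⟨2 * j - 1, by omega⟩
    exact hk ▸ (Nat.ascFactorial_pos k r).ne'
  have hφfδ : φ ((f.toLinearMap ^ r) (δ ^ j)) ≠ 0 := by
    rw [algHom_map_derivation_pow f D φ hφX, hφδ, map_smul,
      Polynomial.mkDerivation_X_sq_pow_X_pow]
    exact smul_ne_zero (pow_ne_zero _ (neg_ne_zero.2 one_ne_zero))
      (smul_ne_zero hasc (pow_ne_zero _ Polynomial.X_ne_zero))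
  exact fun h => hφfδ (by rw [h, map_zero])
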